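/- Fix n ≥ 1, a row-stochastic matrix P ∈ ℝ^{n×n}, rates r : {1,…,n} → ℝ, and q > 0. On the open interval I = {θ ∈ ℝ : q + θ·r(l) > 0 for all l}, define M(θ) by M(θ)_{l,m} = P_{l,m}·q/(q + θ r(l)). Then ρ(M(θ)) > 0 for all θ ∈ I, and the function θ ↦ log ρ(M(θ)) is convex on I. -/

import Mathlib

/-- The spectral radius of a real square matrix: the maximum modulus of its
complex eigenvalues. -/
noncomputable def Matrix.specRad {n : ℕ} (M : Matrix (Fin n) (Fin n) ℝ) : ℝ :=
  (spectralRadius ℂ (M.map (Complex.ofReal : ℝ → ℂ))).toReal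

/-!
By Gelfand's formula, `ρ(A) = lim ‖A ^ k‖ ^ (1 / k)` for the `ℓ∞` operator norm, which for a
nonnegative matrix is the largest row sum. Row sums of `A` at least `c > 0` give row sums of
`A ^ k` at least `c ^ k`, hence `ρ(A) ≥ c`.

Log-convexity is Kingman's argument: if `A ≤ B ^ a * C ^ b` entrywise, Hölder's inequality
`∑ f ^ a * g ^ b ≤ (∑ f) ^ a * (∑ g) ^ b` carries this bound over to the entries of products,
hence of `A ^ k`, and to row sums, so `‖A ^ k‖ ≤ ‖B ^ k‖ ^ a * ‖C ^ k‖ ^ b`, and in the limit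
`ρ(A) ≤ ρ(B) ^ a * ρ(C) ^ b`. The entries `P l m * q / (q + θ * r l)` satisfy such a bound in
`θ` by the weighted AM-GM inequality applied to the affine denominator.
-/

open Matrix Filter Topology

attribute [local instance] Matrix.linftyOpNormedAddCommGroup Matrix.linftyOpNormedRing
  Matrix.linftyOpNormedAlgebra

theorem Real.sum_rpow_mul_rpow_le {ι : Type*} (s : Finset ι) {f g : ι → ℝ}
    (hf : ∀ i ∈ s, 0 ≤ f i) (hg : ∀ i ∈ s, 0 ≤ g i) {a b : ℝ} (ha : 0 ≤ a) (hb : 0 ≤ b)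
    (hab : a + b = 1) :
    ∑ i ∈ s, f i ^ a * g i ^ b ≤ (∑ i ∈ s, f i) ^ a * (∑ i ∈ s, g i) ^ b := by
  rcases ha.eq_or_lt with rfl | ha
  · simp [show b = 1 by linarith]
  rcases hb.eq_or_lt with rfl | hb
  · simp [show a = 1 by linarith]
  have key := Real.inner_le_Lp_mul_Lq_of_nonneg s (Real.holderConjugate_one_div ha hb hab)
    (fun i hi => Real.rpow_nonneg (hf i hi) a) (fun i hi => Real.rpow_nonneg (hg i hi) b)
  have hpow {c x : ℝ} (hc : 0 < c) (hx : 0 ≤ x) : (x ^ c) ^ (1 / c) = x := by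
    rw [← Real.rpow_mul hx, mul_one_div_cancel hc.ne', Real.rpow_one]
  rwa [Finset.sum_congr rfl fun i hi => hpow ha (hf i hi),
    Finset.sum_congr rfl fun i hi => hpow hb (hg i hi), one_div_one_div, one_div_one_div] at key

namespace Matrix

variable {l m n : Type*}

theorem sum_apply_le_linfty_opNorm [Fintype m] [Fintype n] {A : Matrix m n ℝ}
    (hA : ∀ i j, 0 ≤ A i j) (i : m) : ∑ j, A i j ≤ ‖A‖ := by
  rw [← coe_nnnorm, linfty_opNNNorm_def]
  have := NNReal.coe_le_coe.2 (Finset.le_sup (f := fun i => ∑ j, ‖A i j‖₊) (Finset.mem_univ i))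
  simpa only [NNReal.coe_sum, coe_nnnorm, Real.norm_of_nonneg (hA i _)] using this

theorem linfty_opNorm_le_of_sum_norm_le [Fintype m] [Fintype n] {A : Matrix m n ℝ} {c : ℝ}
    (hc : 0 ≤ c) (h : ∀ i, ∑ j, ‖A i j‖ ≤ c) : ‖A‖ ≤ c := by
  lift c to NNReal using hc
  rw [← coe_nnnorm, linfty_opNNNorm_def, NNReal.coe_le_coe, Finset.sup_le_iff]
  intro i _
  rw [← NNReal.coe_le_coe, NNReal.coe_sum]
  simpa only [coe_nnnorm] using h i

theorem linfty_opNorm_map_ofReal [Fintype m] [Fintype n] (A : Matrix m n ℝ) :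
    ‖A.map Complex.ofReal‖ = ‖A‖ := by
  simp [← coe_nnnorm, linfty_opNNNorm_def]

theorem mul_apply_le_rpow_mul_rpow [Fintype m] {a b : ℝ} (ha : 0 ≤ a) (hb : 0 ≤ b)
    (hab : a + b = 1) {A B C : Matrix l m ℝ} {A' B' C' : Matrix m n ℝ}
    (hB : ∀ i j, 0 ≤ B i j) (hC : ∀ i j, 0 ≤ C i j) (hA' : ∀ i j, 0 ≤ A' i j)
    (hB' : ∀ i j, 0 ≤ B' i j) (hC' : ∀ i j, 0 ≤ C' i j)
    (h : ∀ i j, A i j ≤ B i j ^ a * C i j ^ b) (h' : ∀ i j, A' i j ≤ B' i j ^ a * C' i j ^ b)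
    (i : l) (j : n) : (A * A') i j ≤ (B * B') i j ^ a * (C * C') i j ^ b := by
  simp only [mul_apply]
  calc ∑ k, A i k * A' k j
      ≤ ∑ k, (B i k * B' k j) ^ a * (C i k * C' k j) ^ b := by
        refine Finset.sum_le_sum fun k _ => ?_
        rw [Real.mul_rpow (hB i k) (hB' k j), Real.mul_rpow (hC i k) (hC' k j),
          mul_mul_mul_comm]
        exact mul_le_mul (h i k) (h' k j) (hA' k j)
          (mul_nonneg (Real.rpow_nonneg (hB i k) a) (Real.rpow_nonneg (hC i k) b))
    _ ≤ _ := Real.sum_rpow_mul_rpow_le _ (fun k _ => mul_nonneg (hB i k) (hB' k j))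
        (fun k _ => mul_nonneg (hC i k) (hC' k j)) ha hb hab

theorem pow_apply_le_rpow_mul_rpow [Fintype n] [DecidableEq n] {a b : ℝ} (ha : 0 ≤ a)
    (hb : 0 ≤ b) (hab : a + b = 1) {A B C : Matrix n n ℝ} (hA : ∀ i j, 0 ≤ A i j)
    (hB : ∀ i j, 0 ≤ B i j) (hC : ∀ i j, 0 ≤ C i j)
    (h : ∀ i j, A i j ≤ B i j ^ a * C i j ^ b) (k : ℕ) (i j : n) :
    (A ^ k) i j ≤ (B ^ k) i j ^ a * (C ^ k) i j ^ b := by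
  induction k generalizing i j with
  | zero =>
    by_cases hij : i = j
    · simp [hij]
    · simpa [hij] using mul_nonneg (Real.rpow_nonneg le_rfl a) (Real.rpow_nonneg le_rfl b)
  | succ k ih =>
    rw [pow_succ, pow_succ, pow_succ]
    exact mul_apply_le_rpow_mul_rpow ha hb hab (pow_apply_nonneg hB k) (pow_apply_nonneg hC k)
      hA hB hC ih h i j

theorem linfty_opNorm_le_rpow_mul_rpow [Fintype m] [Fintype n] {a b : ℝ} (ha : 0 ≤ a)
    (hb : 0 ≤ b) (hab : a + b = 1) {A B C : Matrix m n ℝ} (hA : ∀ i j, 0 ≤ A i j)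
    (hB : ∀ i j, 0 ≤ B i j) (hC : ∀ i j, 0 ≤ C i j) (h : ∀ i j, A i j ≤ B i j ^ a * C i j ^ b) :
    ‖A‖ ≤ ‖B‖ ^ a * ‖C‖ ^ b := by
  refine linfty_opNorm_le_of_sum_norm_le (by positivity) fun i => ?_
  calc ∑ j, ‖A i j‖ = ∑ j, A i j := by simp only [Real.norm_of_nonneg (hA i _)]
    _ ≤ ∑ j, B i j ^ a * C i j ^ b := Finset.sum_le_sum fun j _ => h i j
    _ ≤ (∑ j, B i j) ^ a * (∑ j, C i j) ^ b :=
      Real.sum_rpow_mul_rpow_le _ (fun j _ => hB i j) (fun j _ => hC i j) ha hb hab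
    _ ≤ ‖B‖ ^ a * ‖C‖ ^ b := by
      gcongr
      · exact Real.rpow_nonneg (Finset.sum_nonneg fun j _ => hC i j) b
      · exact Finset.sum_nonneg fun j _ => hB i j
      · exact sum_apply_le_linfty_opNorm hB i
      · exact Finset.sum_nonneg fun j _ => hC i j
      · exact sum_apply_le_linfty_opNorm hC i

theorem pow_le_sum_pow_apply [Fintype n] [DecidableEq n] {A : Matrix n n ℝ} {c : ℝ}
    (hc : 0 ≤ c) (hA : ∀ i j, 0 ≤ A i j) (h : ∀ i, c ≤ ∑ j, A i j) (k : ℕ) (i : n) :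
    c ^ k ≤ ∑ j, (A ^ k) i j := by
  induction k generalizing i with
  | zero => simp [one_apply]
  | succ k ih =>
    calc c ^ (k + 1) = c * c ^ k := pow_succ' c k
      _ ≤ (∑ t, A i t) * c ^ k := mul_le_mul_of_nonneg_right (h i) (pow_nonneg hc k)
      _ ≤ ∑ t, A i t * ∑ j, (A ^ k) t j := by
        rw [Finset.sum_mul]
        exact Finset.sum_le_sum fun t _ => mul_le_mul_of_nonneg_left (ih t) (hA i t)
      _ = ∑ j, (A ^ (k + 1)) i j := by
        simp_rw [pow_succ', mul_apply, Finset.mul_sum]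
        exact Finset.sum_comm

theorem pow_norm_pow_one_div_tendsto_nhds_specRad {N : ℕ} (A : Matrix (Fin N) (Fin N) ℝ) :
    Tendsto (fun k : ℕ => ‖A ^ k‖ ^ (1 / k : ℝ)) atTop (𝓝 A.specRad) := by
  have : CompleteSpace (Matrix (Fin N) (Fin N) ℂ) := FiniteDimensional.complete ℂ _
  set B := A.map Complex.ofReal
  have hfin : spectralRadius ℂ B ≠ ⊤ :=
    ((spectrum.spectralRadius_le_pow_nnnorm_pow_one_div ℂ B 0).trans_lt
      (by simp [ENNReal.mul_lt_top])).ne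
  have hB (k : ℕ) : ‖B ^ k‖ = ‖A ^ k‖ := by
    rw [← linfty_opNorm_map_ofReal (A ^ k)]
    exact congrArg norm (map_pow (Complex.ofRealHom.mapMatrix) A k).symm
  have := (ENNReal.tendsto_toReal hfin).comp
    (spectrum.pow_norm_pow_one_div_tendsto_nhds_spectralRadius B)
  refine this.congr fun k => ?_
  simp [hB, ENNReal.toReal_ofReal (Real.rpow_nonneg (norm_nonneg _) _)]

theorem le_specRad_of_le_sum_apply {N : ℕ} [NeZero N] {A : Matrix (Fin N) (Fin N) ℝ} {c : ℝ}
    (hc : 0 ≤ c) (hA : ∀ i j, 0 ≤ A i j) (h : ∀ i, c ≤ ∑ j, A i j) : c ≤ A.specRad := by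
  refine ge_of_tendsto (pow_norm_pow_one_div_tendsto_nhds_specRad A) ?_
  filter_upwards [eventually_ne_atTop 0] with k hk
  calc c = (c ^ k) ^ (1 / k : ℝ) := by rw [one_div, Real.pow_rpow_inv_natCast hc hk]
    _ ≤ ‖A ^ k‖ ^ (1 / k : ℝ) := by
      gcongr
      exact (pow_le_sum_pow_apply hc hA h k 0).trans
        (sum_apply_le_linfty_opNorm (pow_apply_nonneg hA k) 0)

theorem specRad_pos_of_sum_apply_pos {N : ℕ} [NeZero N] {A : Matrix (Fin N) (Fin N) ℝ}
    (hA : ∀ i j, 0 ≤ A i j) (h : ∀ i, 0 < ∑ j, A i j) : 0 < A.specRad := by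
  obtain ⟨i₀, hi₀⟩ := Finite.exists_min fun i => ∑ j, A i j
  exact (h i₀).trans_le (le_specRad_of_le_sum_apply (h i₀).le hA hi₀)

theorem specRad_le_rpow_mul_rpow {N : ℕ} {a b : ℝ} (ha : 0 ≤ a) (hb : 0 ≤ b) (hab : a + b = 1)
    {A B C : Matrix (Fin N) (Fin N) ℝ} (hA : ∀ i j, 0 ≤ A i j) (hB : ∀ i j, 0 ≤ B i j)
    (hC : ∀ i j, 0 ≤ C i j) (h : ∀ i j, A i j ≤ B i j ^ a * C i j ^ b) :
    A.specRad ≤ B.specRad ^ a * C.specRad ^ b := by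
  have hlim (D : Matrix (Fin N) (Fin N) ℝ) (c : ℝ) (hc : 0 ≤ c) :=
    ((Real.continuousAt_rpow_const D.specRad c (Or.inr hc)).tendsto).comp
      (pow_norm_pow_one_div_tendsto_nhds_specRad D)
  refine le_of_tendsto_of_tendsto' (pow_norm_pow_one_div_tendsto_nhds_specRad A)
    ((hlim B a ha).mul (hlim C b hb)) fun k => ?_
  have hk := linfty_opNorm_le_rpow_mul_rpow ha hb hab (pow_apply_nonneg hA k)
    (pow_apply_nonneg hB k) (pow_apply_nonneg hC k)
    (pow_apply_le_rpow_mul_rpow ha hb hab hA hB hC h k)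
  simp only [Function.comp]
  calc ‖A ^ k‖ ^ (1 / k : ℝ) ≤ (‖B ^ k‖ ^ a * ‖C ^ k‖ ^ b) ^ (1 / k : ℝ) := by gcongr
    _ = (‖B ^ k‖ ^ (1 / k : ℝ)) ^ a * (‖C ^ k‖ ^ (1 / k : ℝ)) ^ b := by
      rw [Real.mul_rpow (by positivity) (by positivity), ← Real.rpow_mul (norm_nonneg _),
        ← Real.rpow_mul (norm_nonneg _), ← Real.rpow_mul (norm_nonneg _),
        ← Real.rpow_mul (norm_nonneg _), mul_comm a, mul_comm b]

end Matrix

/-- Log-convexity in multiplicative form, which also makes sense for functions with zeros. -/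
def LogConvexOn {E : Type*} [AddCommMonoid E] [Module ℝ E] (s : Set E) (f : E → ℝ) : Prop :=
  Convex ℝ s ∧ ∀ ⦃x⦄, x ∈ s → ∀ ⦃y⦄, y ∈ s → ∀ ⦃a b : ℝ⦄, 0 ≤ a → 0 ≤ b → a + b = 1 →
    f (a • x + b • y) ≤ f x ^ a * f y ^ b

theorem LogConvexOn.convexOn_log {E : Type*} [AddCommMonoid E] [Module ℝ E] {s : Set E}
    {f : E → ℝ} (hf : LogConvexOn s f) (hpos : ∀ x ∈ s, 0 < f x) :
    ConvexOn ℝ s fun x => Real.log (f x) := by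
  refine ⟨hf.1, fun x hx y hy a b ha hb hab => ?_⟩
  calc Real.log (f (a • x + b • y)) ≤ Real.log (f x ^ a * f y ^ b) :=
        Real.log_le_log (hpos _ (hf.1 hx hy ha hb hab)) (hf.2 hx hy ha hb hab)
    _ = a • Real.log (f x) + b • Real.log (f y) := by
        rw [Real.log_mul (Real.rpow_pos_of_pos (hpos x hx) a).ne'
          (Real.rpow_pos_of_pos (hpos y hy) b).ne', Real.log_rpow (hpos x hx),
          Real.log_rpow (hpos y hy), smul_eq_mul, smul_eq_mul]

theorem Matrix.logConvexOn_specRad {E : Type*} [AddCommMonoid E] [Module ℝ E] {s : Set E}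
    {N : ℕ} {M : E → Matrix (Fin N) (Fin N) ℝ} (hs : Convex ℝ s)
    (hM : ∀ x ∈ s, ∀ i j, 0 ≤ M x i j) (h : ∀ i j, LogConvexOn s fun x => M x i j) :
    LogConvexOn s fun x => (M x).specRad :=
  ⟨hs, fun x hx y hy _ _ ha hb hab =>
    specRad_le_rpow_mul_rpow ha hb hab (hM _ (hs hx hy ha hb hab)) (hM x hx) (hM y hy)
      fun i j => (h i j).2 hx hy ha hb hab⟩

theorem convex_setOf_forall_pos_add_mul {ι : Type*} (u : ℝ) (c : ι → ℝ) :
    Convex ℝ {θ : ℝ | ∀ l, 0 < u + θ * c l} := by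
  intro x hx y hy a b ha hb hab l
  have key : u + (a • x + b • y) * c l = a • (u + x * c l) + b • (u + y * c l) := by
    simp only [smul_eq_mul]
    linear_combination (-u) * hab
  rw [key]
  exact convex_Ioi (0 : ℝ) (hx l) (hy l) ha hb hab

theorem logConvexOn_div_add_mul {s : Set ℝ} (hs : Convex ℝ s) {w u c : ℝ} (hw : 0 ≤ w)
    (h : ∀ θ ∈ s, 0 < u + θ * c) : LogConvexOn s fun θ => w / (u + θ * c) := by
  refine ⟨hs, fun x hx y hy a b ha hb hab => ?_⟩
  have hux := h x hx
  have huy := h y hy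
  have key : u + (a • x + b • y) * c = a * (u + x * c) + b * (u + y * c) := by
    simp only [smul_eq_mul]
    linear_combination (-u) * hab
  calc w / (u + (a • x + b • y) * c) ≤ w / ((u + x * c) ^ a * (u + y * c) ^ b) := by
        rw [key]
        exact div_le_div_of_nonneg_left hw (by positivity)
          (Real.geom_mean_le_arith_mean2_weighted ha hb hux.le huy.le hab)
    _ = (w / (u + x * c)) ^ a * (w / (u + y * c)) ^ b := by
        rw [Real.div_rpow hw hux.le, Real.div_rpow hw huy.le, div_mul_div_comm,
          ← Real.rpow_add' hw (by rw [hab]; exact one_ne_zero), hab, Real.rpow_one]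

/-- On the effective domain `I = {θ : q + θ r(l) > 0 ∀ l}`, the spectral
radius of the tilted matrix `M(θ)_{l,m} = P_{l,m} q/(q + θ r(l))` is positive,
and `θ ↦ log ρ(M(θ))` is convex (Kingman log-convexity). -/
theorem scgf_positive_and_convex
    (n : ℕ) (hn : 1 ≤ n)
    (P : Matrix (Fin n) (Fin n) ℝ)
    (hPnn : ∀ l m, 0 ≤ P l m) (hProw : ∀ l, ∑ m, P l m = 1)
    (r : Fin n → ℝ) (q : ℝ) (hq : 0 < q)
    (I : Set ℝ) (hI : I = {θ : ℝ | ∀ l, 0 < q + θ * r l})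
    (M : ℝ → Matrix (Fin n) (Fin n) ℝ)
    (hM : ∀ θ l m, M θ l m = P l m * (q / (q + θ * r l))) :
    (∀ θ ∈ I, 0 < (M θ).specRad) ∧
      ConvexOn ℝ I (fun θ => Real.log ((M θ).specRad)) := by
  have : NeZero n := ⟨by omega⟩
  have hdom : ∀ θ ∈ I, ∀ l, 0 < q + θ * r l := fun θ hθ => by rwa [hI] at hθ
  have hconv : Convex ℝ I := hI ▸ convex_setOf_forall_pos_add_mul q r
  have hMnn : ∀ θ ∈ I, ∀ l m, 0 ≤ M θ l m := fun θ hθ l m => by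
    rw [hM]
    exact mul_nonneg (hPnn l m) (div_pos hq (hdom θ hθ l)).le
  have hpos : ∀ θ ∈ I, 0 < (M θ).specRad := fun θ hθ =>
    specRad_pos_of_sum_apply_pos (hMnn θ hθ) fun l => by
      simp_rw [hM, ← Finset.sum_mul, hProw, one_mul]
      exact div_pos hq (hdom θ hθ l)
  refine ⟨hpos, LogConvexOn.convexOn_log ?_ hpos⟩
  refine logConvexOn_specRad hconv hMnn fun l m => ?_
  simp_rw [hM, ← mul_div_assoc]
  exact logConvexOn_div_add_mul hconv (mul_nonneg (hPnn l m) hq.le) fun θ hθ => hdom θ hθ l
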